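/- arXiv:1212.0415 — 3 statements merged into one kernel-verified Lean document; each statement's English description precedes it below -/
import Mathlib

section
/- Let q be a prime power and let m be a positive divisor of q+1 with m ≠ q+1. The number of affine F_{q^2}-rational points of the curve defined by y^q + y = x^m (i.e., pairs (x,y) ∈ F_{q^2}^2 with y^q + y = x^m) is exactly q(1 + (q-1)m). -/
/-!
Write `q = p ^ n`, so that `#F = q ^ 2`. The map `T y = y ^ q + y` is additive (it is the trace
of `F` over its subfield `𝔽_q`). Its image lies in `{c | c ^ q = c}` and its kernel consists of
roots of `X ^ q + X`; both have at most `q` elements, while their sizes multiply to `q ^ 2`.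
Hence `T` maps onto `𝔽_q` with all fibres of size `q`, and the curve has
`q * #{x | x ^ m ∈ 𝔽_q}` affine points. Apart from `x = 0`, these `x` are the roots of
`x ^ (m * (q - 1)) = 1`, and there are `m * (q - 1)` of them because `m * (q - 1)` divides
`q ^ 2 - 1 = #Fˣ` and `Fˣ` is cyclic.
-/

open Finset Polynomial

lemma Set.ncard_le_natDegree_of_forall_isRoot {R : Type*} [CommRing R] [IsDomain R] {P : R[X]}
    (hP : P ≠ 0) {S : Set R} (hS : ∀ x ∈ S, P.IsRoot x) : S.ncard ≤ P.natDegree := by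
  classical
  calc S.ncard ≤ (P.roots.toFinset : Set R).ncard :=
        Set.ncard_le_ncard (fun x hx => by simpa [mem_roots hP] using hS x hx)
          (Finset.finite_toSet _)
    _ ≤ Multiset.card P.roots := by
        rw [Set.ncard_coe_finset]
        exact Multiset.toFinset_card_le _
    _ ≤ P.natDegree := card_roots' P

lemma Nat.card_subtype_prod_eq_sum_card_filter {α β γ : Type*} [Fintype α] [Fintype β]
    [DecidableEq γ] (f : α → γ) (g : β → γ) :
    Nat.card {P : α × β // g P.2 = f P.1} = ∑ a, #{b | g b = f a} := by
  rw [Nat.card_congr (Equiv.subtypeProdEquivSigmaSubtype fun a b => g b = f a), Nat.card_sigma]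
  simp only [Nat.card_eq_fintype_card, Fintype.card_subtype]

lemma pow_pow_eq_self_iff {G₀ : Type*} [CommGroupWithZero G₀] {m q : ℕ} (hm : 0 < m)
    (hq : 0 < q) (x : G₀) : (x ^ m) ^ q = x ^ m ↔ x = 0 ∨ x ^ (m * (q - 1)) = 1 := by
  rcases eq_or_ne x 0 with rfl | hx
  · simp [zero_pow hm.ne', zero_pow hq.ne']
  · rw [← Nat.sub_add_cancel hq, pow_succ, mul_eq_right₀ (pow_ne_zero m hx), pow_mul]
    simp [hx]

namespace FiniteField

variable {F : Type*} [Field F]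

lemma one_lt_of_card_eq_sq [Fintype F] {q : ℕ} (hF : Fintype.card F = q ^ 2) : 1 < q := by
  by_contra! h
  have : Fintype.card F ≤ 1 := hF ▸ pow_le_one' h 2
  exact (Fintype.one_lt_card (α := F)).not_ge this

lemma ncard_setOf_pow_eq_self_le {q : ℕ} (hq : 1 < q) : {c : F | c ^ q = c}.ncard ≤ q := by
  refine (Set.ncard_le_natDegree_of_forall_isRoot (X_pow_card_sub_X_ne_zero F hq)
    fun c hc => ?_).trans_eq (X_pow_card_sub_X_natDegree_eq F hq)
  simpa [sub_eq_zero] using hc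

section RootsOfUnity

variable [Fintype F] [DecidableEq F]

lemma card_nthRootsFinset_one_of_dvd {d : ℕ} [NeZero d] (hd : d ∣ Fintype.card F - 1) :
    #(nthRootsFinset d (1 : F)) = d := by
  have hcard : Nat.card (rootsOfUnity d F) = d := by
    rw [rootsOfUnity_eq_ker, IsCyclic.card_powMonoidHom_ker, Nat.card_eq_fintype_card,
      Fintype.card_units, Nat.gcd_eq_right hd]
  obtain ⟨ζ, hζ⟩ := card_rootsOfUnity_eq_iff_exists_isPrimitiveRoot.mp hcard
  exact hζ.card_nthRootsFinset

lemma card_filter_pow_pow_eq_self {m q : ℕ} (hm : 0 < m) (hq : 1 < q)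
    (hd : m * (q - 1) ∣ Fintype.card F - 1) :
    #{x : F | (x ^ m) ^ q = x ^ m} = m * (q - 1) + 1 := by
  have hd0 : 0 < m * (q - 1) := Nat.mul_pos hm (by omega)
  have : NeZero (m * (q - 1)) := ⟨hd0.ne'⟩
  have hset : ({x : F | (x ^ m) ^ q = x ^ m} : Finset F) =
      insert 0 (nthRootsFinset (m * (q - 1)) 1) := by
    ext x
    simp [pow_pow_eq_self_iff hm (by omega : 0 < q), mem_nthRootsFinset hd0]
  rw [hset, card_insert_of_notMem (by simp [mem_nthRootsFinset hd0, hd0.ne']),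
    card_nthRootsFinset_one_of_dvd hd]

end RootsOfUnity

section Trace

variable (F) (p n : ℕ) [ExpChar F p]

/-- `y ↦ y ^ q + y` with `q = p ^ n`: the trace of `F` over its subfield with `q` elements
when `#F = q ^ 2`. -/
def frobeniusTrace : F →+ F :=
  (iterateFrobenius F p n : F →+ F) + AddMonoidHom.id F

variable {F p n}

@[simp]
lemma frobeniusTrace_apply (y : F) : frobeniusTrace F p n y = y ^ p ^ n + y := by
  simp [frobeniusTrace, iterateFrobenius_def]

variable [Fintype F] (hF : Fintype.card F = (p ^ n) ^ 2)
include hF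

lemma frobeniusTrace_pow (y : F) :
    frobeniusTrace F p n y ^ p ^ n = frobeniusTrace F p n y := by
  have hy : y ^ (p ^ n) ^ 2 = y := hF ▸ pow_card y
  rw [frobeniusTrace_apply, ← iterateFrobenius_def (R := F) p n, map_add, iterateFrobenius_def,
    iterateFrobenius_def, ← pow_mul, ← sq, hy, add_comm]

lemma range_frobeniusTrace_subset :
    ((frobeniusTrace F p n).range : Set F) ⊆ {c | c ^ p ^ n = c} := by
  rintro _ ⟨y, rfl⟩
  exact frobeniusTrace_pow hF y

lemma ncard_ker_frobeniusTrace_le : ((frobeniusTrace F p n).ker : Set F).ncard ≤ p ^ n := by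
  have hq := one_lt_of_card_eq_sq hF
  have hdeg : (X ^ p ^ n + X : F[X]).natDegree = p ^ n := by
    rw [natDegree_add_eq_left_of_natDegree_lt] <;> simp [hq]
  rw [← hdeg]
  exact Set.ncard_le_natDegree_of_forall_isRoot (ne_zero_of_natDegree_gt (n := 0) (by omega))
    fun y hy => by simpa using hy

lemma ncard_range_frobeniusTrace_mul_ncard_ker :
    ((frobeniusTrace F p n).range : Set F).ncard * ((frobeniusTrace F p n).ker : Set F).ncard
      = (p ^ n) ^ 2 := by
  rw [← hF, ← Nat.card_eq_fintype_card, ← AddSubgroup.card_mul_index (frobeniusTrace F p n).ker,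
    AddSubgroup.index_ker, mul_comm]
  rfl

lemma ncard_ker_frobeniusTrace : ((frobeniusTrace F p n).ker : Set F).ncard = p ^ n := by
  have hrange : ((frobeniusTrace F p n).range : Set F).ncard ≤ p ^ n :=
    (Set.ncard_le_ncard (range_frobeniusTrace_subset hF)).trans
      (ncard_setOf_pow_eq_self_le (one_lt_of_card_eq_sq hF))
  have hmul := ncard_range_frobeniusTrace_mul_ncard_ker hF
  have hker := ncard_ker_frobeniusTrace_le hF
  nlinarith

lemma range_frobeniusTrace : ((frobeniusTrace F p n).range : Set F) = {c | c ^ p ^ n = c} := by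
  have hq := one_lt_of_card_eq_sq hF
  have hrange := ncard_range_frobeniusTrace_mul_ncard_ker hF
  rw [ncard_ker_frobeniusTrace hF, sq] at hrange
  refine Set.eq_of_subset_of_ncard_le (range_frobeniusTrace_subset hF) ?_
  rw [Nat.eq_of_mul_eq_mul_right (by omega) hrange]
  exact ncard_setOf_pow_eq_self_le hq

lemma card_filter_frobeniusTrace_eq [DecidableEq F] (c : F) :
    #{y | frobeniusTrace F p n y = c} = if c ^ p ^ n = c then p ^ n else 0 := by
  split_ifs with hc
  · have hc' : c ∈ Set.range (frobeniusTrace F p n) := by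
      rw [← AddMonoidHom.coe_range, range_frobeniusTrace hF]
      exact hc
    rw [AddMonoidHom.card_fiber_eq_of_mem_range _ hc' ⟨0, map_zero _⟩,
      ← ncard_ker_frobeniusTrace hF, ← Set.ncard_coe_finset, coe_filter]
    simp only [mem_univ, true_and]
    rfl
  · refine card_eq_zero.mpr (filter_eq_empty_iff.mpr fun y _ hy => hc ?_)
    rw [← hy]
    exact frobeniusTrace_pow hF y

end Trace

end FiniteField

theorem affine_point_count_quotient_hermitian_general
    (q m : ℕ) (hq : ∃ p n : ℕ, p.Prime ∧ 0 < n ∧ q = p ^ n)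
    (hm : 0 < m) (hmd : m ∣ q + 1)
    (F : Type) [Field F] [Fintype F] (hF : Fintype.card F = q ^ 2) :
    Nat.card {P : F × F // P.2 ^ q + P.2 = P.1 ^ m} = q * (1 + (q - 1) * m) := by
  classical
  obtain ⟨p, n, hp, -, rfl⟩ := hq
  have : Fact p.Prime := ⟨hp⟩
  have : CharP F p := charP_of_card_eq_prime_pow (hF.trans (pow_mul p n 2).symm)
  have hq := FiniteField.one_lt_of_card_eq_sq hF
  have hdvd : m * (p ^ n - 1) ∣ Fintype.card F - 1 := by
    rw [hF, ← one_pow 2, Nat.sq_sub_sq, one_pow]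
    exact mul_dvd_mul_right hmd _
  calc Nat.card {P : F × F // P.2 ^ p ^ n + P.2 = P.1 ^ m}
      = ∑ x : F, #{y | FiniteField.frobeniusTrace F p n y = x ^ m} := by
        simpa using Nat.card_subtype_prod_eq_sum_card_filter (fun x : F => x ^ m)
          (FiniteField.frobeniusTrace F p n)
    _ = ∑ x : F, if (x ^ m) ^ p ^ n = x ^ m then p ^ n else 0 := by
        simp_rw [FiniteField.card_filter_frobeniusTrace_eq hF]
    _ = p ^ n * (1 + (p ^ n - 1) * m) := by
        rw [sum_ite, sum_const_zero, add_zero, sum_const, smul_eq_mul,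
          FiniteField.card_filter_pow_pow_eq_self hm hq hdvd]
        ring

/-- For a prime power `q` and a positive divisor `m` of `q+1` with
`m ≠ q+1`, the affine curve `y^q + y = x^m` over the field with `q^2` elements
has exactly `q * (1 + (q-1) * m)` rational points. -/
theorem affine_point_count_quotient_hermitian
    (q m : ℕ) (hq : ∃ p n : ℕ, p.Prime ∧ 0 < n ∧ q = p ^ n)
    (hm : 0 < m) (hmd : m ∣ q + 1) (hne : m ≠ q + 1)
    (F : Type) [Field F] [Fintype F] (hF : Fintype.card F = q ^ 2) :
    Nat.card {P : F × F // P.2 ^ q + P.2 = P.1 ^ m} = q * (1 + (q - 1) * m) :=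
  affine_point_count_quotient_hermitian_general q m hq hm hmd F hF
end

section
/- Let F be a field and Z ⊆ ℙ²(F) a finite set of points with |Z| ≤ d + 1 for some integer d > 0. Then Z imposes independent conditions on the space of homogeneous polynomials of degree d in three variables: the evaluation map from degree-d forms to F^Z (after choosing representatives of the points) is surjective. -/
open MvPolynomial

section Aux

variable {F : Type*} [Field F]

/-- The linear polynomial in three variables corresponding to a dual functional. -/
noncomputable def linPoly (f : Module.Dual F (Fin 3 → F)) : MvPolynomial (Fin 3) F :=
  ∑ i, C (f fun j => if i = j then 1 else 0) * X i

lemma linPoly_isHomogeneous (f : Module.Dual F (Fin 3 → F)) :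
    (linPoly f).IsHomogeneous 1 := by
  apply IsHomogeneous.sum
  intro i _
  have := (isHomogeneous_C (Fin 3) (f fun j => if i = j then 1 else 0)).mul
    (isHomogeneous_X F i)
  simpa using this

lemma eval_linPoly (f : Module.Dual F (Fin 3 → F)) (v : Fin 3 → F) :
    eval v (linPoly f) = f v := by
  rw [LinearMap.pi_apply_eq_sum_univ f v]
  simp [linPoly, mul_comm, smul_eq_mul]

lemma exists_dual_sep {z w : Fin 3 → F} (h : ∀ a : F, z ≠ a • w) :
    ∃ f : Module.Dual F (Fin 3 → F), f z ≠ 0 ∧ f w = 0 := by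
  have hznot : z ∉ Submodule.span F {w} := by
    intro hmem
    obtain ⟨a, ha⟩ := Submodule.mem_span_singleton.mp hmem
    exact h a ha.symm
  obtain ⟨f, hf1, hf2⟩ := Submodule.exists_dual_map_eq_bot_of_notMem hznot inferInstance
  refine ⟨f, hf1, ?_⟩
  have : f w ∈ (Submodule.span F ({w} : Set (Fin 3 → F))).map f :=
    ⟨w, Submodule.mem_span_singleton_self w, rfl⟩
  simpa [hf2] using this

end Aux

/-- at most `d + 1` distinct points of `ℙ²(F)` (given by nonzero,
pairwise non-proportional representatives in `F³`) impose independent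
conditions on homogeneous forms of degree `d`: the evaluation map onto `F^Z`
is surjective. -/
theorem points_impose_independent_conditions
    (F : Type*) [Field F] (d : ℕ) (hd : 0 < d)
    (Z : Finset (Fin 3 → F))
    (hZ0 : ∀ z ∈ Z, z ≠ 0)
    (hZprop : ∀ z ∈ Z, ∀ w ∈ Z, z ≠ w → ∀ c : F, z ≠ c • w)
    (hcard : Z.card ≤ d + 1) :
    ∀ c : (Fin 3 → F) → F, ∃ p : MvPolynomial (Fin 3) F,
      p.IsHomogeneous d ∧ ∀ z ∈ Z, eval z p = c z := by
  intro c
  classical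
  -- Step 1: for each `z ∈ Z` there is a homogeneous form of degree `d`
  -- nonvanishing at `z` and vanishing at all other points of `Z`.
  have key : ∀ z ∈ Z, ∃ q : MvPolynomial (Fin 3) F, q.IsHomogeneous d ∧
      eval z q ≠ 0 ∧ ∀ w ∈ Z, w ≠ z → eval w q = 0 := by
    intro z hz
    have hlin : ∀ w ∈ Z.erase z, ∃ f : Module.Dual F (Fin 3 → F),
        f z ≠ 0 ∧ f w = 0 := by
      intro w hw
      obtain ⟨hwz, hwZ⟩ := Finset.mem_erase.mp hw
      exact exists_dual_sep (hZprop z hz w hwZ (Ne.symm hwz))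
    choose f hf1 hf2 using hlin
    -- a coordinate where z is nonzero
    obtain ⟨i, hi⟩ : ∃ i, z i ≠ 0 := by
      by_contra h
      push_neg at h
      exact hZ0 z hz (funext h)
    have hZ1 : 1 ≤ Z.card := Finset.card_pos.mpr ⟨z, hz⟩
    set e : ℕ := d + 1 - Z.card with he
    refine ⟨(X i) ^ e * ∏ w ∈ (Z.erase z).attach, linPoly (f w w.2), ?_, ?_, ?_⟩
    · have hprod : (∏ w ∈ (Z.erase z).attach, linPoly (f w w.2)).IsHomogeneous
          (∑ w ∈ (Z.erase z).attach, 1) :=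
        IsHomogeneous.prod _ _ _ (fun w _ => linPoly_isHomogeneous _)
      have hpow : ((X i : MvPolynomial (Fin 3) F) ^ e).IsHomogeneous e := by
        simpa using (isHomogeneous_X F i).pow e
      have := hpow.mul hprod
      have hsum : e + (∑ _w ∈ (Z.erase z).attach, 1) = d := by
        simp only [Finset.sum_const, smul_eq_mul, mul_one, Finset.card_attach,
          Finset.card_erase_of_mem hz]
        omega
      rwa [hsum] at this
    · simp only [map_mul, map_pow, eval_X, map_prod]
      apply mul_ne_zero (pow_ne_zero _ hi)
      apply Finset.prod_ne_zero_iff.mpr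
      intro w _
      rw [eval_linPoly]
      exact hf1 w w.2
    · intro w hwZ hwz
      have hwmem : w ∈ Z.erase z := Finset.mem_erase.mpr ⟨hwz, hwZ⟩
      simp only [map_mul, map_pow, eval_X, map_prod]
      apply mul_eq_zero_of_right
      apply Finset.prod_eq_zero (Finset.mem_attach _ (⟨w, hwmem⟩ : {x // x ∈ Z.erase z}))
      rw [eval_linPoly]
      exact hf2 (⟨w, hwmem⟩ : {x // x ∈ Z.erase z}) hwmem
  choose q hq1 hq2 hq3 using key
  refine ⟨∑ z ∈ Z.attach, C (c z * (eval (z : Fin 3 → F) (q z z.2))⁻¹) * q z z.2,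
    ?_, ?_⟩
  · apply IsHomogeneous.sum
    intro z _
    have := (isHomogeneous_C (Fin 3)
      (c z * (eval (z : Fin 3 → F) (q z z.2))⁻¹)).mul (hq1 z z.2)
    simpa using this
  · intro z hz
    rw [map_sum]
    rw [Finset.sum_eq_single_of_mem ⟨z, hz⟩ (Finset.mem_attach _ _)]
    · simp only [map_mul, eval_C]
      rw [mul_assoc, inv_mul_cancel₀ (hq2 z hz), mul_one]
    · intro w _ hw
      have hne : (w : Fin 3 → F) ≠ z := by
        intro h
        apply hw
        exact Subtype.ext h
      simp [hq3 w w.2 z hz (Ne.symm hne)]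
end

section
/- Let F be a field, d > 0 an integer, and Z ⊆ ℙ²(F) a finite set of points with d + 2 ≤ |Z| ≤ 2d + 1. If no line of ℙ² contains at least d + 2 points of Z, then Z imposes independent conditions on the homogeneous forms of degree d (the evaluation map from degree-d forms to F^Z is surjective). -/
/-!
Fix `z ∈ Z`; by Lagrange interpolation it suffices to find a form of degree `d` that vanishes on
`Z \ {z}` but not at `z`. Colour each point of `Z \ {z}` by the line joining it to `z`: there
are at most `2d` points and every colour class has at most `d` of them. Repeatedly pairing a point
of a largest class with a point of a largest other class covers `Z \ {z}` by at most `d` pairs of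
differently coloured points. The line through such a pair misses `z`, so the product of these
lines, padded by a power of a coordinate not vanishing at `z`, is the required form.
-/

open Finset Submodule Matrix MvPolynomial

namespace Finset

variable {α β : Type*} [DecidableEq β]

lemma card_filter_eq_add_card_filter_eq_add_card_filter_eq_le (S : Finset α) (c : α → β)
    {b₁ b₂ b₃ : β} (h₁₂ : b₁ ≠ b₂) (h₁₃ : b₁ ≠ b₃) (h₂₃ : b₂ ≠ b₃) :
    #{x ∈ S | c x = b₁} + #{x ∈ S | c x = b₂} + #{x ∈ S | c x = b₃} ≤ #S := by
  have h := sum_card_fiberwise_eq_card_filter S {b₁, b₂, b₃} c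
  rw [sum_insert (by simp [h₁₂, h₁₃]), sum_insert (by simp [h₂₃]), sum_singleton] at h
  have := card_filter_le S (fun x => c x ∈ ({b₁, b₂, b₃} : Finset β))
  omega

variable [DecidableEq α]

lemma card_filter_erase_le (S : Finset α) (c : α → β) (w : α) (b : β) :
    #{x ∈ S.erase w | c x = b} ≤ #{x ∈ S | c x = b} :=
  card_le_card (filter_subset_filter _ (erase_subset w S))

lemma card_filter_erase_lt {S : Finset α} {c : α → β} {w : α} (hw : w ∈ S) :
    #{x ∈ S.erase w | c x = c w} < #{x ∈ S | c x = c w} := by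
  rw [filter_erase]; exact card_erase_lt_of_mem (mem_filter.2 ⟨hw, rfl⟩)

lemma erase_card_filter_le_of_forall_eq (c : α → β) {k : ℕ} {S : Finset α} {w : α} (hw : w ∈ S)
    (hmono : ∀ x ∈ S, c x = c w) (hfib : ∀ b, #{x ∈ S | c x = b} ≤ k + 1) :
    #(S.erase w) ≤ 2 * k ∧ ∀ b, #{x ∈ S.erase w | c x = b} ≤ k := by
  have hS : #{x ∈ S | c x = c w} = #S := congrArg card (filter_true_of_mem hmono)
  have hSw : #(S.erase w) + 1 = #S := card_erase_add_one hw
  have := hfib (c w)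
  exact ⟨by omega, fun b => (card_filter_le _ _).trans (by omega)⟩

/-- Take `w` in a largest colour class and `w'` in a largest other class: any third class is no
larger than these two, so it holds at most a third of the `2k + 2` points. -/
lemma exists_pair_erase_card_filter_le (c : α → β) {k : ℕ} {S : Finset α} (hne : S.Nonempty)
    (hS : #S ≤ 2 * (k + 1)) (hfib : ∀ b, #{x ∈ S | c x = b} ≤ k + 1) :
    ∃ w ∈ S, ∃ w' ∈ S, (w = w' ∨ c w ≠ c w') ∧ #((S.erase w).erase w') ≤ 2 * k ∧
      ∀ b, #{x ∈ (S.erase w).erase w' | c x = b} ≤ k := by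
  obtain ⟨w, hw, hw_max⟩ := exists_max_image S (fun x => #{y ∈ S | c y = c x}) hne
  by_cases hmono : ∀ x ∈ S, c x = c w
  · refine ⟨w, hw, w, hw, Or.inl rfl, ?_⟩
    rw [erase_idem]
    exact erase_card_filter_le_of_forall_eq c hw hmono hfib
  push Not at hmono
  obtain ⟨w', hw'R, hw'_max⟩ := exists_max_image {x ∈ S | c x ≠ c w}
    (fun x => #{y ∈ S | c y = c x}) (filter_nonempty_iff.2 hmono)
  obtain ⟨hw', hcw'⟩ := mem_filter.1 hw'R
  have hw'_mem : w' ∈ S.erase w := mem_erase.2 ⟨fun h => hcw' (congrArg c h), hw'⟩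
  refine ⟨w, hw, w', hw', Or.inr (Ne.symm hcw'), ?_, fun b => ?_⟩
  · have := card_erase_add_one hw'_mem
    have := card_erase_add_one hw
    omega
  have h₁ := card_filter_erase_le (S.erase w) c w' b
  have h₂ := card_filter_erase_le S c w b
  by_cases hbw : b = c w
  · subst hbw
    have := card_filter_erase_lt (c := c) hw
    have := hfib (c w)
    omega
  by_cases hbw' : b = c w'
  · subst hbw'
    have := card_filter_erase_lt (c := c) hw'_mem
    have := card_filter_erase_le S c w (c w')
    have := hfib (c w')
    omega
  have hb_le : #{x ∈ S | c x = b} ≤ #{x ∈ S | c x = c w'} := by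
    obtain h | ⟨u, hu⟩ := {x ∈ S | c x = b}.eq_empty_or_nonempty
    · simp [h]
    · obtain ⟨huS, rfl⟩ := mem_filter.1 hu
      exact hw'_max u (mem_filter.2 ⟨huS, hbw⟩)
  have := hw_max w' hw'
  have := card_filter_eq_add_card_filter_eq_add_card_filter_eq_le S c (Ne.symm hcw') (Ne.symm hbw)
    (Ne.symm hbw')
  omega

/-- A pair `(x, x)` stands for a single point. -/
theorem exists_pairing_of_card_filter_le (c : α → β) (k : ℕ) (S : Finset α)
    (hS : #S ≤ 2 * k) (hfib : ∀ b, #{x ∈ S | c x = b} ≤ k) :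
    ∃ P : Finset (α × α), #P ≤ k ∧
      (∀ p ∈ P, p.1 ∈ S ∧ p.2 ∈ S ∧ (p.1 = p.2 ∨ c p.1 ≠ c p.2)) ∧
      ∀ x ∈ S, ∃ p ∈ P, x = p.1 ∨ x = p.2 := by
  induction k generalizing S with
  | zero => exact ⟨∅, by simp, by simp, by simp_all⟩
  | succ k ih =>
    obtain rfl | hne := S.eq_empty_or_nonempty
    · exact ⟨∅, by simp, by simp, by simp⟩
    obtain ⟨w, hw, w', hw', hcol, hS', hfib'⟩ := exists_pair_erase_card_filter_le c hne hS hfib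
    obtain ⟨P, hP, hPS, hPcover⟩ := ih _ hS' hfib'
    refine ⟨insert (w, w') P, (card_insert_le _ _).trans (by omega), ?_, fun x hx => ?_⟩
    · simp only [mem_insert, forall_eq_or_imp]
      exact ⟨⟨hw, hw', hcol⟩, fun p hp =>
        have ⟨h₁, h₂, h⟩ := hPS p hp
        ⟨mem_of_mem_erase (mem_of_mem_erase h₁), mem_of_mem_erase (mem_of_mem_erase h₂), h⟩⟩
    · by_cases hxw : x = w ∨ x = w'
      · exact ⟨(w, w'), mem_insert_self _ _, hxw⟩
      push Not at hxw
      obtain ⟨p, hp, hxp⟩ := hPcover x (mem_erase.2 ⟨hxw.2, mem_erase.2 ⟨hxw.1, hx⟩⟩)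
      exact ⟨p, mem_insert_of_mem hp, hxp⟩

end Finset

section LinearAlgebra

variable {F : Type*} [Field F]

lemma notMem_span_pair_of_span_pair_ne {V : Type*} [AddCommGroup V] [Module F V] {z w w' : V}
    (hw : z ∉ span F {w}) (hw' : z ∉ span F {w'})
    (h : w = w' ∨ span F {z, w} ≠ span F {z, w'}) : z ∉ span F {w, w'} := by
  intro hz
  rcases h with rfl | hne
  · exact hw (by simpa using hz)
  have hw'_mem : w' ∈ span F {z, w} := mem_span_insert_exchange (Set.pair_comm w w' ▸ hz) hw
  have hw_mem : w ∈ span F {z, w'} := mem_span_insert_exchange hz hw'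
  refine hne (le_antisymm ?_ ?_) <;> rw [span_le, Set.insert_subset_iff, Set.singleton_subset_iff]
  · exact ⟨subset_span (Set.mem_insert z _), hw_mem⟩
  · exact ⟨subset_span (Set.mem_insert z _), hw'_mem⟩

variable {n : Type*} [Fintype n]

lemma span_pair_ne_top (hn : 2 < Fintype.card n) (z v : n → F) : span F {z, v} ≠ ⊤ := by
  classical
  intro h
  have := finrank_span_finset_le_card (R := F) ({z, v} : Finset (n → F))
  rw [Set.finrank, Finset.coe_pair, h, finrank_top, Module.finrank_fintype_fun_eq_card] at this
  have := Finset.card_le_two (a := z) (b := v)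
  omega

variable [DecidableEq n]

lemma exists_dotProduct_ne_zero_of_notMem {W : Submodule F (n → F)} {z : n → F} (hz : z ∉ W) :
    ∃ L : n → F, L ⬝ᵥ z ≠ 0 ∧ ∀ v ∈ W, L ⬝ᵥ v = 0 := by
  obtain ⟨f, hfz, hfW⟩ := W.exists_dual_map_eq_bot_of_notMem hz inferInstance
  have hf : ∀ v, (dotProductEquiv F n).symm f ⬝ᵥ v = f v :=
    LinearMap.congr_fun ((dotProductEquiv F n).apply_symm_apply f)
  exact ⟨_, by rwa [hf], fun v hv => by rw [hf]; exact (mem_bot F).1 (hfW ▸ mem_map_of_mem hv)⟩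

lemma exists_ne_zero_dotProduct_eq_zero_of_ne_top {W : Submodule F (n → F)} (hW : W ≠ ⊤) :
    ∃ L : n → F, L ≠ 0 ∧ ∀ v ∈ W, L ⬝ᵥ v = 0 := by
  obtain ⟨x, -, hx⟩ := SetLike.exists_of_lt (lt_top_iff_ne_top.2 hW)
  obtain ⟨L, hLx, hL⟩ := exists_dotProduct_ne_zero_of_notMem hx
  exact ⟨L, fun h => hLx (by simp [h]), hL⟩

end LinearAlgebra

section Forms

variable {σ R : Type*} [CommSemiring R]

noncomputable def linearForm [Fintype σ] (L : σ → R) : MvPolynomial σ R := ∑ i, C (L i) * X i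

lemma isHomogeneous_linearForm [Fintype σ] (L : σ → R) : (linearForm L).IsHomogeneous 1 :=
  IsHomogeneous.sum _ _ _ fun i _ => by
    simpa using (isHomogeneous_C σ (L i)).mul (isHomogeneous_X R i)

lemma eval_linearForm [Fintype σ] (L v : σ → R) : eval v (linearForm L) = L ⬝ᵥ v := by
  simp [linearForm, dotProduct]

lemma exists_isHomogeneous_eval_ne_zero [NoZeroDivisors R] {z : σ → R} (hz : z ≠ 0) (n : ℕ) :
    ∃ q : MvPolynomial σ R, q.IsHomogeneous n ∧ eval z q ≠ 0 := by
  obtain ⟨i, hi⟩ := Function.ne_iff.1 hz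
  exact ⟨X i ^ n, by simpa using (isHomogeneous_X R i).pow n, by simpa using pow_ne_zero n hi⟩

theorem exists_isHomogeneous_eval_eq_of_separating {F : Type*} [Field F] {d : ℕ}
    (Z : Finset (σ → F)) (hsep : ∀ z ∈ Z, ∃ p : MvPolynomial σ F,
      p.IsHomogeneous d ∧ eval z p ≠ 0 ∧ ∀ w ∈ Z, w ≠ z → eval w p = 0)
    (c : (σ → F) → F) : ∃ p : MvPolynomial σ F, p.IsHomogeneous d ∧ ∀ z ∈ Z, eval z p = c z := by
  choose! q hq hqz hqw using hsep
  refine ⟨∑ z ∈ Z, C (c z / eval z (q z)) * q z,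
    IsHomogeneous.sum _ _ _ fun z hz => by simpa using (isHomogeneous_C σ _).mul (hq z hz),
    fun z hz => ?_⟩
  rw [map_sum, sum_eq_single z (fun w hw hwz => by simp [hqw w hw z hz (Ne.symm hwz)])
    (fun h => (h hz).elim)]
  simp [hqz z hz]

end Forms

section ProjectivePlane

variable {F : Type*} [Field F] [DecidableEq F] {d : ℕ} {Z : Finset (Fin 3 → F)}

lemma card_filter_span_pair_eq_le
    (hline : ∀ L : Fin 3 → F, L ≠ 0 → #{x ∈ Z | L ⬝ᵥ x = 0} ≤ d + 1) {z : Fin 3 → F}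
    (hz : z ∈ Z) (b : Submodule F (Fin 3 → F)) : #{x ∈ Z.erase z | span F {z, x} = b} ≤ d := by
  obtain h | ⟨x₀, hx₀⟩ := {x ∈ Z.erase z | span F {z, x} = b}.eq_empty_or_nonempty
  · simp [h]
  obtain rfl := (mem_filter.1 hx₀).2
  obtain ⟨L, hL0, hL⟩ :=
    exists_ne_zero_dotProduct_eq_zero_of_ne_top (span_pair_ne_top (by simp) z x₀)
  have hsub : insert z {x ∈ Z.erase z | span F {z, x} = span F {z, x₀}} ⊆
      {x ∈ Z | L ⬝ᵥ x = 0} := by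
    intro x hx
    obtain rfl | hx := mem_insert.1 hx
    · exact mem_filter.2 ⟨hz, hL _ (subset_span (Set.mem_insert _ _))⟩
    · obtain ⟨hxZ, hxb⟩ := mem_filter.1 hx
      exact mem_filter.2 ⟨mem_of_mem_erase hxZ, hL _ (hxb ▸ subset_span (by simp))⟩
  have := card_le_card hsub
  rw [card_insert_of_notMem (by simp)] at this
  have := hline L hL0
  omega

lemma exists_separating_form_of_no_long_line (hZ : #Z ≤ 2 * d + 1)
    (hline : ∀ L : Fin 3 → F, L ≠ 0 → #{x ∈ Z | L ⬝ᵥ x = 0} ≤ d + 1) {z : Fin 3 → F}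
    (hz : z ∈ Z) (hz0 : z ≠ 0) (hprop : ∀ w ∈ Z, w ≠ z → z ∉ span F {w}) :
    ∃ p : MvPolynomial (Fin 3) F,
      p.IsHomogeneous d ∧ eval z p ≠ 0 ∧ ∀ w ∈ Z, w ≠ z → eval w p = 0 := by
  obtain ⟨P, hPd, hPZ, hPcover⟩ := exists_pairing_of_card_filter_le (fun x => span F {z, x}) d
    (Z.erase z) (by have := card_erase_add_one hz; omega) (card_filter_span_pair_eq_le hline hz)
  have hlines : ∀ p ∈ P, ∃ L : Fin 3 → F, L ⬝ᵥ z ≠ 0 ∧ L ⬝ᵥ p.1 = 0 ∧ L ⬝ᵥ p.2 = 0 := by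
    intro p hp
    obtain ⟨h₁, h₂, hcol⟩ := hPZ p hp
    obtain ⟨L, hLz, hL⟩ := exists_dotProduct_ne_zero_of_notMem <| notMem_span_pair_of_span_pair_ne
      (hprop _ (mem_of_mem_erase h₁) (ne_of_mem_erase h₁))
      (hprop _ (mem_of_mem_erase h₂) (ne_of_mem_erase h₂)) hcol
    exact ⟨L, hLz, hL _ (subset_span (by simp)), hL _ (subset_span (by simp))⟩
  choose! L hLz hL₁ hL₂ using hlines
  obtain ⟨q, hq, hqz⟩ := exists_isHomogeneous_eval_ne_zero hz0 (d - #P)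
  refine ⟨q * ∏ p ∈ P, linearForm (L p), ?_, ?_, fun w hw hwz => ?_⟩
  · have := hq.mul (IsHomogeneous.prod P _ (fun _ => 1) fun p _ => isHomogeneous_linearForm (L p))
    simpa [Nat.sub_add_cancel hPd] using this
  · simpa [eval_linearForm, prod_ne_zero_iff, hqz] using hLz
  · obtain ⟨p, hp, rfl | rfl⟩ := hPcover w (mem_erase.2 ⟨hwz, hw⟩)
    · rw [map_mul, map_prod, prod_eq_zero hp (by rw [eval_linearForm, hL₁ p hp]), mul_zero]
    · rw [map_mul, map_prod, prod_eq_zero hp (by rw [eval_linearForm, hL₂ p hp]), mul_zero]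

end ProjectivePlane

theorem no_long_line_implies_independent_conditions_general
    (F : Type*) [Field F] [DecidableEq F] (d : ℕ)
    (Z : Finset (Fin 3 → F))
    (hZ0 : ∀ z ∈ Z, z ≠ 0)
    (hZprop : ∀ z ∈ Z, ∀ w ∈ Z, z ≠ w → ∀ c : F, z ≠ c • w)
    (hcard₂ : Z.card ≤ 2 * d + 1)
    (hline : ¬ ∃ L : Fin 3 → F, L ≠ 0 ∧
      d + 2 ≤ (Z.filter (fun z => ∑ i, L i * z i = 0)).card) :
    ∀ c : (Fin 3 → F) → F, ∃ p : MvPolynomial (Fin 3) F,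
      p.IsHomogeneous d ∧ ∀ z ∈ Z, eval z p = c z := by
  push Not at hline
  intro c
  refine exists_isHomogeneous_eval_eq_of_separating Z (fun z hz => ?_) c
  refine exists_separating_form_of_no_long_line hcard₂ (fun L hL => Nat.le_of_lt_succ (hline L hL))
    hz (hZ0 z hz) fun w hw hwz hzw => ?_
  obtain ⟨a, rfl⟩ := mem_span_singleton.1 hzw
  exact hZprop _ hz w hw (Ne.symm hwz) a rfl

/-- a set `Z` of `d+2 ≤ |Z| ≤ 2d+1` distinct points of `ℙ²(F)`
(nonzero, pairwise non-proportional representatives) such that no line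
contains at least `d+2` of them imposes independent conditions on
homogeneous forms of degree `d`. -/
theorem no_long_line_implies_independent_conditions
    (F : Type*) [Field F] [DecidableEq F] (d : ℕ) (hd : 0 < d)
    (Z : Finset (Fin 3 → F))
    (hZ0 : ∀ z ∈ Z, z ≠ 0)
    (hZprop : ∀ z ∈ Z, ∀ w ∈ Z, z ≠ w → ∀ c : F, z ≠ c • w)
    (hcard₁ : d + 2 ≤ Z.card) (hcard₂ : Z.card ≤ 2 * d + 1)
    (hline : ¬ ∃ L : Fin 3 → F, L ≠ 0 ∧
      d + 2 ≤ (Z.filter (fun z => ∑ i, L i * z i = 0)).card) :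
    ∀ c : (Fin 3 → F) → F, ∃ p : MvPolynomial (Fin 3) F,
      p.IsHomogeneous d ∧ ∀ z ∈ Z, eval z p = c z :=
  no_long_line_implies_independent_conditions_general F d Z hZ0 hZprop hcard₂ hline
end
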